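/- arXiv:0805.0766 — 3 statements merged into one kernel-verified Lean document; each statement's English description precedes it below -/
import Mathlib

section
/- For a list of ads each with impression value e_i ≥ 0 and continuation probability q_i ∈ [0,1], define the efficiency E(L) of a list L recursively by E([]) = 0 and E(a :: L) = e_a + q_a · E(L). Then swapping two adjacent ads i and i' (with i before i') in any list changes the efficiency by exactly (e_i + q_i·e_{i'}) − (e_{i'} + q_{i'}·e_i) times the product of the continuation probabilities of the ads preceding them. -/
noncomputable section

/-- Efficiency of an ordered list of ads `(e, q)`. -/
def eff : List (ℝ × ℝ) → ℝ
  | [] => 0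
  | a :: L => a.1 + a.2 * eff L

/-- Product of continuation probabilities of a list of ads. -/
def qprod (L : List (ℝ × ℝ)) : ℝ := (L.map Prod.snd).prod

/- Efficiency is additive along concatenation once the tail is discounted by the
continuation probability of the head, so a swap inside `X ++ _` is a swap of the
first two ads of the suffix, scaled by `qprod X`; and a swap of the first two ads
leaves the common tail's contribution `q_i q_{i'} E(Y)` unchanged. -/

@[simp]
theorem qprod_cons (a : ℝ × ℝ) (L : List (ℝ × ℝ)) : qprod (a :: L) = a.2 * qprod L := by
  simp [qprod]

theorem eff_append (L M : List (ℝ × ℝ)) : eff (L ++ M) = eff L + qprod L * eff M := by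
  induction L with
  | nil => simp [eff, qprod]
  | cons a L ih => simp only [List.cons_append, eff, ih, qprod_cons]; ring

theorem eff_swap_head_sub (a b : ℝ × ℝ) (Y : List (ℝ × ℝ)) :
    eff (a :: b :: Y) - eff (b :: a :: Y) = (a.1 + a.2 * b.1) - (b.1 + b.2 * a.1) := by
  simp only [eff]; ring

theorem swap_adjacent_change_general
    (X Y : List (ℝ × ℝ)) (i i' : ℝ × ℝ) :
    eff (X ++ [i, i'] ++ Y) - eff (X ++ [i', i] ++ Y)
      = ((i.1 + i.2 * i'.1) - (i'.1 + i'.2 * i.1)) * qprod X := by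
  simp only [List.append_assoc, eff_append X]
  rw [← eff_swap_head_sub i i' Y]
  simp only [List.cons_append, List.nil_append]
  ring

/-- Swapping two adjacent ads `i` (before) and `i'` changes the efficiency by exactly
`(e_i + q_i·e_{i'}) − (e_{i'} + q_{i'}·e_i)` times the product of the continuation
probabilities of the preceding ads. -/
theorem swap_adjacent_change
    (X Y : List (ℝ × ℝ)) (i i' : ℝ × ℝ)
    (hi : 0 ≤ i.1 ∧ 0 ≤ i.2 ∧ i.2 ≤ 1)
    (hi' : 0 ≤ i'.1 ∧ 0 ≤ i'.2 ∧ i'.2 ≤ 1)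
    (hX : ∀ a ∈ X, 0 ≤ a.1 ∧ 0 ≤ a.2 ∧ a.2 ≤ 1)
    (hY : ∀ a ∈ Y, 0 ≤ a.1 ∧ 0 ≤ a.2 ∧ a.2 ≤ 1) :
    eff (X ++ [i, i'] ++ Y) - eff (X ++ [i', i] ++ Y)
      = ((i.1 + i.2 * i'.1) - (i'.1 + i'.2 * i.1)) * qprod X :=
  swap_adjacent_change_general X Y i i'
end
end

section
/- Subset substructure (for the dynamic-programming recurrence): define F(i, j) over bidders sorted in decreasing adjusted ecpm by F(n+1, j) = 0, F(i, k+1) = 0, and F(i, j) = max(e_i + q_i · F(i+1, j+1), F(i+1, j)). Then F(1, 1) equals the maximum efficiency over all lists of at most k distinct bidders sorted in decreasing adjusted-ecpm order. -/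
/-! Splitting on whether an optimal sublist uses the first bidder `a` gives the recurrence:
if it does, its tail is a sublist of the remaining bidders with one slot fewer, and since
`q_a ≥ 0` the efficiency `e_a + q_a · eff tail` is monotone in the tail's efficiency. -/

noncomputable section

/-- The dynamic program `F(i,j) = max(e_i + q_i·F(i+1,j+1), F(i+1,j))`, phrased over
the list of remaining bidders and the number of remaining slots. -/
def dpF : List (ℝ × ℝ) → ℕ → ℝ
  | [], _ => 0
  | _ :: _, 0 => 0
  | a :: L, (m + 1) => max (a.1 + a.2 * dpF L m) (dpF L (m + 1))

theorem dpF_zero (L : List (ℝ × ℝ)) : dpF L 0 = 0 := by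
  cases L <;> rfl

theorem dpF_cons_succ (a : ℝ × ℝ) (L : List (ℝ × ℝ)) (m : ℕ) :
    dpF (a :: L) (m + 1) = max (a.1 + a.2 * dpF L m) (dpF L (m + 1)) :=
  rfl

theorem dpF_le_dpF_cons (a : ℝ × ℝ) (L : List (ℝ × ℝ)) (k : ℕ) : dpF L k ≤ dpF (a :: L) k := by
  cases k with
  | zero => simp only [dpF_zero, le_refl]
  | succ m => exact dpF_cons_succ a L m ▸ le_max_right _ _

theorem exists_sublist_eff_eq_dpF :
    ∀ (L : List (ℝ × ℝ)) (k : ℕ), ∃ S, S.Sublist L ∧ S.length ≤ k ∧ eff S = dpF L k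
  | [], _ => ⟨[], .slnil, Nat.zero_le _, rfl⟩
  | _ :: _, 0 => ⟨[], List.nil_sublist _, le_rfl, rfl⟩
  | a :: L, m + 1 => by
    rw [dpF_cons_succ]
    rcases max_choice (a.1 + a.2 * dpF L m) (dpF L (m + 1)) with h | h <;> rw [h]
    · obtain ⟨S, hS, hlen, heff⟩ := exists_sublist_eff_eq_dpF L m
      exact ⟨a :: S, hS.cons_cons a, Nat.succ_le_succ hlen, by rw [eff, heff]⟩
    · obtain ⟨S, hS, hlen, heff⟩ := exists_sublist_eff_eq_dpF L (m + 1)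
      exact ⟨S, hS.cons a, hlen, heff⟩

theorem eff_le_dpF {S L : List (ℝ × ℝ)} (hq : ∀ a ∈ L, 0 ≤ a.2) (hS : S.Sublist L) {k : ℕ}
    (hk : S.length ≤ k) : eff S ≤ dpF L k := by
  induction hS generalizing k with
  | slnil => rfl
  | @cons S L a _ ih =>
    exact (ih (fun b hb => hq b (.tail a hb)) hk).trans (dpF_le_dpF_cons a L k)
  | @cons_cons S L a _ ih =>
    obtain ⟨m, rfl⟩ : ∃ m, k = m + 1 := Nat.exists_eq_succ_of_ne_zero (by grind)
    have htail : eff S ≤ dpF L m :=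
      ih (fun b hb => hq b (.tail a hb)) (Nat.le_of_succ_le_succ hk)
    calc eff (a :: S) = a.1 + a.2 * eff S := rfl
      _ ≤ a.1 + a.2 * dpF L m := by gcongr; exact hq a List.mem_cons_self
      _ ≤ dpF (a :: L) (m + 1) := dpF_cons_succ a L m ▸ le_max_left _ _

theorem dp_computes_optimum_general
    (L : List (ℝ × ℝ)) (k : ℕ)
    (hL : ∀ a ∈ L, 0 ≤ a.1 ∧ 0 ≤ a.2 ∧ a.2 < 1) :
    IsGreatest {x : ℝ | ∃ S : List (ℝ × ℝ), S.Sublist L ∧ S.length ≤ k ∧ eff S = x}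
      (dpF L k) := by
  refine ⟨exists_sublist_eff_eq_dpF L k, ?_⟩
  rintro x ⟨S, hS, hk, rfl⟩
  exact eff_le_dpF (fun a ha => (hL a ha).2.1) hS hk

/-- With bidders sorted in (strictly) decreasing adjusted-ecpm order, `F(1,1)` (i.e.
`dpF L k`) equals the maximum efficiency over all lists of at most `k` distinct
bidders listed in decreasing adjusted-ecpm order (i.e. sublists of `L`). -/
theorem dp_computes_optimum
    (L : List (ℝ × ℝ)) (k : ℕ)
    (hL : ∀ a ∈ L, 0 ≤ a.1 ∧ 0 ≤ a.2 ∧ a.2 < 1)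
    (hsorted : L.Pairwise (fun u v => u.1 / (1 - u.2) > v.1 / (1 - v.2))) :
    IsGreatest {x : ℝ | ∃ S : List (ℝ × ℝ), S.Sublist L ∧ S.length ≤ k ∧ eff S = x}
      (dpF L k) :=
  dp_computes_optimum_general L k hL
end
end

section
/- Since by Theorem (sorting by adjusted ecpm) any optimal assignment is sorted in decreasing adjusted ecpm, the maximum over all injective assignments of k slots equals the maximum of E over subsets S of bidders of size at most k, where each subset is listed in decreasing adjusted-ecpm order. -/
/-!
Exchange argument: swapping two adjacent ads `u, v` changes the efficiency by
`u.1 (1 - v.2) - v.1 (1 - u.2)`, whatever follows them, so putting the ad of larger adjusted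
ecpm first never hurts. Insertion sort by decreasing adjusted ecpm therefore does not decrease
the efficiency of an assignment, and when adjusted ecpms are distinct the sorted list is
strictly decreasing. Thus the two sets of values dominate each other, so their suprema agree.
-/

noncomputable section

def adjEcpm (a : ℝ × ℝ) : ℝ := a.1 / (1 - a.2)

def sortByAdjEcpm (l : List (ℝ × ℝ)) : List (ℝ × ℝ) :=
  l.insertionSort fun u v => adjEcpm v ≤ adjEcpm u

theorem List.Pairwise.comp_lt_of_comp_le {α β : Type*} [PartialOrder β] {f : α → β}
    {l : List α} (hl : l.Pairwise fun u v => f v ≤ f u) (hnd : l.Nodup)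
    (hf : Set.InjOn f {a | a ∈ l}) : l.Pairwise fun u v => f v < f u :=
  (hnd.and hl).imp_of_mem fun hu hv ⟨hne, hle⟩ =>
    hle.lt_of_ne fun heq => hne (hf hu hv heq.symm)

theorem eff_cons_le_eff_cons (a : ℝ × ℝ) (ha : 0 ≤ a.2) {l₁ l₂ : List (ℝ × ℝ)}
    (h : eff l₁ ≤ eff l₂) : eff (a :: l₁) ≤ eff (a :: l₂) := by
  simp only [eff]
  gcongr

theorem eff_cons_cons_le_eff_swap {u v : ℝ × ℝ} (hu : u.2 < 1) (hv : v.2 < 1)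
    (h : adjEcpm u ≤ adjEcpm v) (L : List (ℝ × ℝ)) :
    eff (u :: v :: L) ≤ eff (v :: u :: L) := by
  have hcross : u.1 * (1 - v.2) ≤ v.1 * (1 - u.2) :=
    (div_le_div_iff₀ (sub_pos.2 hu) (sub_pos.2 hv)).1 h
  simp only [eff]
  linarith

theorem eff_cons_le_eff_orderedInsert (a : ℝ × ℝ) (ha : a.2 < 1) (l : List (ℝ × ℝ))
    (hl : ∀ b ∈ l, 0 ≤ b.2 ∧ b.2 < 1) :
    eff (a :: l) ≤ eff (l.orderedInsert (fun u v => adjEcpm v ≤ adjEcpm u) a) := by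
  induction l with
  | nil => rfl
  | cons b l ih =>
    have hb := hl b List.mem_cons_self
    by_cases hab : adjEcpm b ≤ adjEcpm a
    · rw [List.orderedInsert_cons, if_pos hab]
    · rw [List.orderedInsert_cons, if_neg hab]
      calc eff (a :: b :: l) ≤ eff (b :: a :: l) :=
            eff_cons_cons_le_eff_swap ha hb.2 (le_of_not_ge hab) l
        _ ≤ _ := eff_cons_le_eff_cons b hb.1 (ih fun c hc => hl c (List.mem_cons_of_mem _ hc))

theorem eff_le_eff_sortByAdjEcpm (l : List (ℝ × ℝ)) (hl : ∀ b ∈ l, 0 ≤ b.2 ∧ b.2 < 1) :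
    eff l ≤ eff (sortByAdjEcpm l) := by
  induction l with
  | nil => rfl
  | cons a l ih =>
    have ha := hl a List.mem_cons_self
    have hl' : ∀ b ∈ l, 0 ≤ b.2 ∧ b.2 < 1 := fun b hb => hl b (List.mem_cons_of_mem _ hb)
    calc eff (a :: l) ≤ eff (a :: sortByAdjEcpm l) := eff_cons_le_eff_cons a ha.1 (ih hl')
      _ ≤ eff (sortByAdjEcpm (a :: l)) :=
        eff_cons_le_eff_orderedInsert a ha.2 _ fun b hb =>
          hl' b ((List.perm_insertionSort _ l).mem_iff.1 hb)

/-- The maximum efficiency over all injective assignments of at most `k` slots equals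
the maximum over assignments listed in decreasing adjusted-ecpm order (i.e. over
subsets of size at most `k` listed in sorted order). -/
theorem max_over_assignments_eq_max_over_sorted
    (C : Finset (ℝ × ℝ)) (k : ℕ)
    (hC : ∀ a ∈ C, 0 ≤ a.1 ∧ 0 ≤ a.2 ∧ a.2 < 1)
    (hdistinct : ∀ a ∈ C, ∀ b ∈ C, a.1 / (1 - a.2) = b.1 / (1 - b.2) → a = b) :
    sSup {x : ℝ | ∃ T : List (ℝ × ℝ), T.Nodup ∧ (∀ a ∈ T, a ∈ C) ∧
        T.length ≤ k ∧ eff T = x}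
      = sSup {x : ℝ | ∃ T : List (ℝ × ℝ), T.Nodup ∧ (∀ a ∈ T, a ∈ C) ∧
        T.length ≤ k ∧
        T.Pairwise (fun u v => u.1 / (1 - u.2) > v.1 / (1 - v.2)) ∧ eff T = x} := by
  have hinj : Set.InjOn adjEcpm C := hdistinct
  refine csSup_eq_csSup_of_forall_exists_le ?_ ?_
  · rintro _ ⟨T, hnd, hmem, hlen, rfl⟩
    have hperm : (sortByAdjEcpm T).Perm T := List.perm_insertionSort _ T
    have hmem' : ∀ a ∈ sortByAdjEcpm T, a ∈ C := fun a ha => hmem a (hperm.mem_iff.1 ha)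
    have hnd' := hperm.nodup_iff.2 hnd
    have hsorted := (List.pairwise_insertionSort _ T).comp_lt_of_comp_le hnd'
      (hinj.mono hmem')
    exact ⟨_, ⟨_, hnd', hmem', hperm.length_eq ▸ hlen, hsorted, rfl⟩,
      eff_le_eff_sortByAdjEcpm T fun b hb => (hC b (hmem b hb)).2⟩
  · rintro _ ⟨T, hnd, hmem, hlen, -, rfl⟩
    exact ⟨_, ⟨T, hnd, hmem, hlen, rfl⟩, le_rfl⟩
end
end
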